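/- arXiv:2305.15356 — 5 statements merged into one kernel-verified Lean document; each statement's English description precedes it below -/
import Mathlib

section
/- For α ∈ (0,1), the principal value integral PV ∫₀^∞ t^(α−1)/(1−t) dt, defined as lim_{ε→0⁺} (∫₀^{1−ε} t^(α−1)/(1−t) dt + ∫_{1+ε}^∞ t^(α−1)/(1−t) dt), equals 0 if and only if α = 1/2. -/
/-!
Substituting `t ↦ 1/t` turns the tail `∫_{1+ε}^∞ t^(α-1)/(1-t) dt` into
`-∫_0^{1/(1+ε)} t^(-α)/(1-t) dt`. The two truncation points `1 - ε` and `1/(1+ε)` are only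
`ε²/(1+ε)` apart while the integrand between them is `O(1/ε)`, so the principal value is
`∫_0^1 (t^(α-1) - t^(-α))/(1-t) dt`. This integral converges absolutely because
`|t^p - t^q| ≤ t^(min p q) (1 - t)` on `(0,1]` when `|p - q| ≤ 1`, and its integrand has the
strict sign of `1/2 - α` on `(0,1)`.
-/

open MeasureTheory Filter Real Set
open scoped Topology Interval

theorem setIntegral_Ioi_eq_setIntegral_Ioo_inv {E : Type*} [NormedAddCommGroup E]
    [NormedSpace ℝ E] (g : ℝ → E) {b : ℝ} (hb : 0 < b) :
    ∫ t in Ioi b, g t = ∫ x in Ioo 0 b⁻¹, (x ^ 2)⁻¹ • g x⁻¹ := by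
  have himage : (fun x : ℝ => x⁻¹) '' Ioo 0 b⁻¹ = Ioi b := by
    rw [image_inv_eq_inv, inv_Ioo_0_left (inv_pos.2 hb), inv_inv]
  rw [← himage, integral_image_eq_integral_abs_deriv_smul measurableSet_Ioo
    (fun x hx => (hasDerivAt_inv hx.1.ne').hasDerivWithinAt) inv_injective.injOn]
  simp only [abs_neg, abs_inv, abs_pow, sq_abs]

theorem inv_sq_mul_inv_rpow_sub_one_div_one_sub_inv (α : ℝ) {x : ℝ} (hx : 0 < x) :
    (x ^ 2)⁻¹ * (x⁻¹ ^ (α - 1) / (1 - x⁻¹)) = -(x ^ (-α) / (1 - x)) := by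
  rcases eq_or_ne x 1 with rfl | hx1
  · simp -- both sides are `0`, as division by zero is `0`
  have h1x : 1 - x ≠ 0 := sub_ne_zero.2 (Ne.symm hx1)
  rw [inv_rpow hx.le, rpow_sub_one hx.ne', rpow_neg hx.le]
  have : x ^ α ≠ 0 := (rpow_pos_of_pos hx α).ne'
  field_simp
  ring

theorem setIntegral_Ioi_rpow_sub_one_div_one_sub (α : ℝ) {b : ℝ} (hb : 0 < b) :
    ∫ t in Ioi b, t ^ (α - 1) / (1 - t) = -∫ x in (0:ℝ)..b⁻¹, x ^ (-α) / (1 - x) := by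
  rw [setIntegral_Ioi_eq_setIntegral_Ioo_inv _ hb, intervalIntegral.integral_of_le
    (inv_pos.2 hb).le, integral_Ioc_eq_integral_Ioo, ← integral_neg]
  refine setIntegral_congr_fun measurableSet_Ioo fun x hx => ?_
  exact inv_sq_mul_inv_rpow_sub_one_div_one_sub_inv α hx.1

theorem intervalIntegrable_rpow_div_one_sub {c b : ℝ} (hc : -1 < c) (hb : b < 1) :
    IntervalIntegrable (fun t => t ^ c / (1 - t)) volume 0 b := by
  simp only [div_eq_mul_inv]
  refine (intervalIntegral.intervalIntegrable_rpow' hc).mul_continuousOn ?_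
  refine ContinuousOn.inv₀ (by fun_prop) fun t ht => sub_ne_zero.2 (ne_of_gt ?_)
  exact ht.2.trans_lt (max_lt one_pos hb)

theorem abs_rpow_sub_rpow_le {p q t : ℝ} (hpq : |p - q| ≤ 1) (ht0 : 0 < t) (ht1 : t ≤ 1) :
    |t ^ p - t ^ q| ≤ t ^ min p q * (1 - t) := by
  wlog hle : p ≤ q generalizing p q
  · rw [abs_sub_comm, min_comm]
    exact this (by rwa [abs_sub_comm]) (le_of_not_ge hle)
  have hsplit : t ^ p - t ^ q = t ^ p * (1 - t ^ (q - p)) := by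
    rw [mul_sub, mul_one, ← rpow_add ht0, add_sub_cancel]
  have hlow : t ≤ t ^ (q - p) := by
    have hqp : q - p ≤ 1 := (abs_sub_comm p q ▸ le_abs_self (q - p)).trans hpq
    simpa only [rpow_one] using rpow_le_rpow_of_exponent_ge ht0 ht1 hqp
  have hup : t ^ (q - p) ≤ 1 := rpow_le_one ht0.le ht1 (by linarith)
  rw [min_eq_left hle, hsplit, abs_of_nonneg (mul_nonneg (rpow_nonneg ht0.le _) (by linarith))]
  gcongr

theorem intervalIntegrable_rpow_sub_rpow_div_one_sub {p q : ℝ} (hp : -1 < p) (hq : -1 < q)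
    (hpq : |p - q| ≤ 1) :
    IntervalIntegrable (fun t => (t ^ p - t ^ q) / (1 - t)) volume 0 1 := by
  refine (intervalIntegral.intervalIntegrable_rpow' (lt_min hp hq)).mono_fun'
    (by fun_prop : Measurable fun t : ℝ => (t ^ p - t ^ q) / (1 - t)).aestronglyMeasurable ?_
  rw [uIoc_of_le zero_le_one]
  filter_upwards [ae_restrict_mem measurableSet_Ioc] with t ⟨ht0, ht1⟩
  rcases ht1.eq_or_lt with rfl | ht1
  · simp
  rw [norm_div, Real.norm_eq_abs, Real.norm_of_nonneg (by linarith), div_le_iff₀ (by linarith)]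
  exact abs_rpow_sub_rpow_le hpq ht0 ht1.le

theorem intervalIntegral_rpow_sub_rpow_div_one_sub_pos {p q : ℝ} (hp : -1 < p) (hpq : p < q)
    (hqp : q ≤ p + 1) : 0 < ∫ t in (0:ℝ)..1, (t ^ p - t ^ q) / (1 - t) := by
  refine intervalIntegral.intervalIntegral_pos_of_pos_on
    (intervalIntegrable_rpow_sub_rpow_div_one_sub hp (by linarith)
      (by rw [abs_le]; constructor <;> linarith)) (fun t ⟨ht0, ht1⟩ => ?_) zero_lt_one
  exact div_pos (sub_pos.2 (rpow_lt_rpow_of_exponent_gt ht0 ht1 hpq)) (sub_pos.2 ht1)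

theorem intervalIntegral_rpow_sub_rpow_div_one_sub_eq_zero_iff {p q : ℝ} (hp : -1 < p)
    (hq : -1 < q) (hpq : |p - q| ≤ 1) :
    ∫ t in (0:ℝ)..1, (t ^ p - t ^ q) / (1 - t) = 0 ↔ p = q := by
  obtain ⟨hqp, hpq⟩ := abs_le.1 hpq
  refine ⟨fun h => ?_, fun h => by simp [h]⟩
  by_contra hne
  rcases lt_or_gt_of_ne hne with hlt | hlt
  · exact (intervalIntegral_rpow_sub_rpow_div_one_sub_pos hp hlt (by linarith)).ne' h
  · have hswap : ∫ t in (0:ℝ)..1, (t ^ p - t ^ q) / (1 - t)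
        = -∫ t in (0:ℝ)..1, (t ^ q - t ^ p) / (1 - t) := by
      rw [← intervalIntegral.integral_neg]
      simp only [← neg_div, neg_sub]
    rw [hswap, neg_eq_zero] at h
    exact (intervalIntegral_rpow_sub_rpow_div_one_sub_pos hq hlt (by linarith)).ne' h

theorem tendsto_intervalIntegral_upper_sub {E : Type*} [NormedAddCommGroup E] [NormedSpace ℝ E]
    {f : ℝ → E} {a b : ℝ} (hab : a < b) (hf : IntervalIntegrable f volume a b) :
    Tendsto (fun ε => ∫ t in a..(b - ε), f t) (𝓝[>] 0) (𝓝 (∫ t in a..b, f t)) := by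
  have hcont := intervalIntegral.continuousOn_primitive_interval' hf left_mem_uIcc
  refine (hcont b right_mem_uIcc).tendsto.comp (tendsto_nhdsWithin_iff.2 ⟨?_, ?_⟩)
  · exact tendsto_nhdsWithin_of_tendsto_nhds (by simpa using (continuous_sub_left b).tendsto 0)
  · filter_upwards [Ioo_mem_nhdsGT (sub_pos.2 hab)] with ε ⟨hε0, hεb⟩
    rw [uIcc_of_le hab.le]
    constructor <;> linarith

theorem tendsto_intervalIntegral_one_sub_inv_one_add {E : Type*} [NormedAddCommGroup E]
    [NormedSpace ℝ E] {g : ℝ → E} {M : ℝ}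
    (hg : ∀ t ∈ Ioo (1 / 2 : ℝ) 1, ‖g t‖ ≤ M / (1 - t)) :
    Tendsto (fun ε => ∫ t in (1 - ε)..(1 + ε)⁻¹, g t) (𝓝[>] 0) (𝓝 0) := by
  have hM : 0 ≤ M := by
    have := (norm_nonneg _).trans (hg (3 / 4) ⟨by norm_num, by norm_num⟩)
    norm_num at this
    linarith
  refine squeeze_zero_norm' ?_ (tendsto_nhdsWithin_of_tendsto_nhds
    (by simpa using (continuous_const_mul M).tendsto 0))
  filter_upwards [Ioo_mem_nhdsGT (by norm_num : (0:ℝ) < 1 / 2)] with ε ⟨hε0, hε1⟩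
  have hε : 0 < 1 + ε := by linarith
  have hinv : (1 + ε)⁻¹ = 1 - ε / (1 + ε) := by field_simp; ring
  have hgap : 1 - ε < 1 - ε / (1 + ε) := by
    have : ε / (1 + ε) < ε := div_lt_self hε0 (by linarith)
    linarith
  rw [hinv]
  have hbound : ∀ t ∈ Ι (1 - ε) (1 - ε / (1 + ε)), ‖g t‖ ≤ M * (1 + ε) / ε := by
    rw [uIoc_of_le hgap.le]
    rintro t ⟨ht0, ht1⟩
    have hpos : 0 < ε / (1 + ε) := by positivity
    refine (hg t ⟨by linarith, by linarith⟩).trans ?_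
    calc M / (1 - t) ≤ M / (ε / (1 + ε)) := by gcongr; linarith
      _ = M * (1 + ε) / ε := by field_simp
  refine (intervalIntegral.norm_integral_le_of_norm_le_const hbound).trans_eq ?_
  rw [abs_of_pos (by linarith)]
  field_simp
  ring

theorem norm_rpow_neg_div_one_sub_le {α : ℝ} (hα : α ≤ 1) :
    ∀ t ∈ Ioo (1 / 2 : ℝ) 1, ‖t ^ (-α) / (1 - t)‖ ≤ 2 / (1 - t) := by
  rintro t ⟨ht0, ht1⟩
  have hpos : 0 < t := by linarith
  rw [norm_div, Real.norm_of_nonneg (rpow_nonneg hpos.le _),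
    Real.norm_of_nonneg (by linarith)]
  gcongr
  calc t ^ (-α) ≤ t ^ (-1 : ℝ) := rpow_le_rpow_of_exponent_ge hpos ht1.le (by linarith)
    _ = t⁻¹ := rpow_neg_one t
    _ ≤ 2 := by rw [inv_le_comm₀ hpos two_pos]; linarith

theorem pv_rpow_div_one_sub_eq {α ε : ℝ} (hα : α ∈ Ioo (0:ℝ) 1) (hε : ε ∈ Ioo (0:ℝ) 1) :
    (∫ t in (0:ℝ)..(1 - ε), t ^ (α - 1) / (1 - t)) +
        ∫ t in Ioi (1 + ε), t ^ (α - 1) / (1 - t)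
      = (∫ t in (0:ℝ)..(1 - ε), (t ^ (α - 1) - t ^ (-α)) / (1 - t))
        - ∫ t in (1 - ε)..(1 + ε)⁻¹, t ^ (-α) / (1 - t) := by
  obtain ⟨hα0, hα1⟩ := hα
  obtain ⟨hε0, hε1⟩ := hε
  have hinv : (1 + ε)⁻¹ < 1 := inv_lt_one_of_one_lt₀ (by linarith)
  have h_sub_one := intervalIntegrable_rpow_div_one_sub (c := α - 1) (by linarith)
    (show 1 - ε < 1 by linarith)
  have h_neg := intervalIntegrable_rpow_div_one_sub (c := -α) (by linarith)
    (show 1 - ε < 1 by linarith)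
  have h_neg_inv := intervalIntegrable_rpow_div_one_sub (c := -α) (by linarith) hinv
  rw [setIntegral_Ioi_rpow_sub_one_div_one_sub α (by linarith),
    ← intervalIntegral.integral_add_adjacent_intervals h_neg
      (h_neg.symm.trans h_neg_inv)]
  simp only [sub_div]
  rw [intervalIntegral.integral_sub h_sub_one h_neg]
  ring

theorem tendsto_pv_rpow_div_one_sub {α : ℝ} (hα : α ∈ Ioo (0:ℝ) 1) :
    Tendsto (fun ε => (∫ t in (0:ℝ)..(1 - ε), t ^ (α - 1) / (1 - t)) +
        ∫ t in Ioi (1 + ε), t ^ (α - 1) / (1 - t))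
      (𝓝[>] 0) (𝓝 (∫ t in (0:ℝ)..1, (t ^ (α - 1) - t ^ (-α)) / (1 - t))) := by
  obtain ⟨hα0, hα1⟩ := hα
  have hint := intervalIntegrable_rpow_sub_rpow_div_one_sub (p := α - 1) (q := -α)
    (by linarith) (by linarith) (by rw [abs_le]; constructor <;> linarith)
  have hlim := (tendsto_intervalIntegral_upper_sub zero_lt_one hint).sub
    (tendsto_intervalIntegral_one_sub_inv_one_add (norm_rpow_neg_div_one_sub_le hα1.le))
  rw [sub_zero] at hlim
  refine hlim.congr' ?_
  filter_upwards [Ioo_mem_nhdsGT zero_lt_one] with ε hε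
  exact (pv_rpow_div_one_sub_eq ⟨hα0, hα1⟩ hε).symm

/-- For `α ∈ (0,1)`, the principal value `PV ∫₀^∞ t^(α−1)/(1−t) dt`, defined as the
limit as `ε → 0⁺` of `∫₀^{1−ε} t^(α−1)/(1−t) dt + ∫_{1+ε}^∞ t^(α−1)/(1−t) dt`,
equals `0` if and only if `α = 1/2`. -/
theorem pv_integral_eq_zero_iff (α : ℝ) (hα : α ∈ Set.Ioo (0:ℝ) 1) (L : ℝ)
    (hL : Tendsto
      (fun ε : ℝ =>
        (∫ t in (0:ℝ)..(1 - ε), t ^ (α - 1) / (1 - t)) +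
        ∫ t in Set.Ioi (1 + ε), t ^ (α - 1) / (1 - t))
      (nhdsWithin 0 (Set.Ioi 0)) (nhds L)) :
    L = 0 ↔ α = 1 / 2 := by
  obtain ⟨hα0, hα1⟩ := hα
  rw [tendsto_nhds_unique hL (tendsto_pv_rpow_div_one_sub ⟨hα0, hα1⟩),
    intervalIntegral_rpow_sub_rpow_div_one_sub_eq_zero_iff (by linarith) (by linarith)
      (by rw [abs_le]; constructor <;> linarith)]
  constructor <;> intro h <;> linarith
end

section
/- Fix x₁ > 0 and α ∈ (0,1). Then lim_{x₂→0⁺} (1/(2π)) ∫₀^∞ x₂ s^(α−1) / ((x₁ − s)² + x₂²) ds = x₁^(α−1)/2, and the corresponding limit as x₂ → 0⁻ equals −x₁^(α−1)/2. -/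
/-!
The kernel `y / ((x - s) ^ 2 + y ^ 2)` is `π` times an approximate identity at `x` as `y → 0⁺`,
so it reproduces `π x₁ ^ (α - 1)` from `s ^ (α - 1)` on a neighbourhood `(0, 2 x₁]` of `x₁`,
where this function is integrable and continuous at `x₁`. On `(2 x₁, ∞)` the kernel is at most
`y / (x₁ - s) ^ 2` and `s ^ (α - 1) / (x₁ - s) ^ 2` is integrable, so that part is `O(y)`.
The integral is odd in `y`, which gives the limit from below.
-/

open MeasureTheory Filter Real Set Topology

section PoissonKernel

variable {E : Type*} [NormedAddCommGroup E] [NormedSpace ℝ E]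

lemma abs_div_sq_add_sq_le_inv (x y s : ℝ) : |y / ((x - s) ^ 2 + y ^ 2)| ≤ |y|⁻¹ := by
  rw [abs_div, abs_of_nonneg (by positivity : (0 : ℝ) ≤ (x - s) ^ 2 + y ^ 2)]
  rcases eq_or_ne y 0 with rfl | hy
  · simp
  calc |y| / ((x - s) ^ 2 + y ^ 2) ≤ |y| / |y| ^ 2 :=
        div_le_div_of_nonneg_left (abs_nonneg y) (by positivity)
          (by rw [sq_abs]; nlinarith [sq_nonneg (x - s)])
    _ = |y|⁻¹ := by field_simp

lemma norm_div_sq_add_sq_smul_le {x s : ℝ} (hs : s ≠ x) (y : ℝ) (v : E) :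
    ‖(y / ((x - s) ^ 2 + y ^ 2)) • v‖ ≤ |y| * (‖v‖ / (x - s) ^ 2) := by
  have : 0 < (x - s) ^ 2 := by have := sub_ne_zero.2 hs.symm; positivity
  rw [norm_smul, Real.norm_eq_abs, abs_div,
    abs_of_nonneg (by positivity : (0 : ℝ) ≤ (x - s) ^ 2 + y ^ 2), ← mul_div_assoc,
    div_mul_eq_mul_div]
  gcongr
  exact le_add_of_nonneg_right (sq_nonneg y)

lemma tendsto_norm_mul_inv_one_add_sq_cobounded :
    Tendsto (fun u : ℝ => ‖u‖ * (1 + u ^ 2)⁻¹) (Bornology.cobounded ℝ) (𝓝 0) := by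
  refine squeeze_zero' (Eventually.of_forall fun u => by positivity)
    (Eventually.of_forall fun u => ?_) tendsto_norm_cobounded_atTop.inv_tendsto_atTop
  rcases eq_or_ne u 0 with rfl | hu
  · simp
  simp only [Real.norm_eq_abs, ← div_eq_mul_inv]
  calc |u| / (1 + u ^ 2) ≤ |u| / |u| ^ 2 :=
        div_le_div_of_nonneg_left (abs_nonneg u) (by positivity) (by rw [sq_abs]; linarith)
    _ = |u|⁻¹ := by field_simp

/-- With `c = y⁻¹`, the kernel is `c • φ (c • (x - s))` for the Cauchy density
`φ u = π⁻¹ (1 + u ^ 2)⁻¹`, a peak function of total mass one. -/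
theorem tendsto_integral_poisson_smul [CompleteSpace E] {g : ℝ → E} {x : ℝ} (hg : Integrable g)
    (hgx : ContinuousAt g x) :
    Tendsto (fun y : ℝ => ∫ s, (y / ((x - s) ^ 2 + y ^ 2)) • g s) (𝓝[>] 0) (𝓝 (π • g x)) := by
  have hpeak := tendsto_integral_comp_smul_smul_of_integrable' (μ := volume)
    (φ := fun u : ℝ => π⁻¹ * (1 + u ^ 2)⁻¹) (fun u => by positivity)
    (by rw [integral_const_mul, integral_univ_inv_one_add_sq, inv_mul_cancel₀ pi_ne_zero])
    (by simpa [mul_left_comm _ π⁻¹] using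
      tendsto_norm_mul_inv_one_add_sq_cobounded.const_mul π⁻¹) hg hgx
  refine ((hpeak.comp tendsto_inv_nhdsGT_zero).const_smul π).congr' ?_
  filter_upwards [self_mem_nhdsWithin] with y (hy : 0 < y)
  simp only [Function.comp_apply, Module.finrank_self, pow_one, smul_eq_mul, ← integral_smul,
    smul_smul]
  congr 1 with s
  congr 1
  field_simp
  ring

theorem tendsto_setIntegral_poisson_smul [CompleteSpace E] {g : ℝ → E} {x : ℝ} {u : Set ℝ}
    (hu : u ∈ 𝓝 x) (hum : MeasurableSet u) (hg : IntegrableOn g u) (hgx : ContinuousAt g x) :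
    Tendsto (fun y : ℝ => ∫ s in u, (y / ((x - s) ^ 2 + y ^ 2)) • g s) (𝓝[>] 0)
      (𝓝 (π • g x)) := by
  have hgu : g =ᶠ[𝓝 x] u.indicator g :=
    eventually_of_mem hu fun s hs => (indicator_of_mem hs g).symm
  simpa only [← integral_indicator hum, indicator_smul, ← hgu.eq_of_nhds] using
    tendsto_integral_poisson_smul (hg.integrable_indicator hum) (hgx.congr hgu)

theorem integrableOn_poisson_smul {g : ℝ → E} {x : ℝ} {t : Set ℝ} (hg : IntegrableOn g t)
    (y : ℝ) : IntegrableOn (fun s => (y / ((x - s) ^ 2 + y ^ 2)) • g s) t :=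
  hg.bdd_smul |y|⁻¹
    (by fun_prop : Measurable fun s => y / ((x - s) ^ 2 + y ^ 2)).aestronglyMeasurable
    (Eventually.of_forall fun s => abs_div_sq_add_sq_le_inv x y s)

theorem integrableOn_poisson_smul_of_integrableOn_norm_div_sq {g : ℝ → E} {x : ℝ} {t : Set ℝ}
    (hgm : AEStronglyMeasurable g (volume.restrict t))
    (hg : IntegrableOn (fun s => ‖g s‖ / (x - s) ^ 2) t) (y : ℝ) :
    IntegrableOn (fun s => (y / ((x - s) ^ 2 + y ^ 2)) • g s) t := by
  refine (hg.const_mul |y|).mono'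
    ((by fun_prop : Measurable fun s => y / ((x - s) ^ 2 + y ^ 2)).aestronglyMeasurable.smul hgm) ?_
  filter_upwards [Measure.ae_ne _ x] with s hs using norm_div_sq_add_sq_smul_le hs y (g s)

theorem tendsto_setIntegral_poisson_smul_zero {g : ℝ → E} {x : ℝ} {t : Set ℝ}
    (hg : IntegrableOn (fun s => ‖g s‖ / (x - s) ^ 2) t) :
    Tendsto (fun y : ℝ => ∫ s in t, (y / ((x - s) ^ 2 + y ^ 2)) • g s) (𝓝 0) (𝓝 0) := by
  refine squeeze_zero_norm (fun y => ?_)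
    (by simpa using (continuous_abs.tendsto (0 : ℝ)).mul_const (∫ s in t, ‖g s‖ / (x - s) ^ 2))
  rw [← integral_const_mul]
  exact norm_integral_le_of_norm_le (hg.const_mul |y|)
    (by filter_upwards [Measure.ae_ne _ x] with s hs using norm_div_sq_add_sq_smul_le hs y (g s))

end PoissonKernel

lemma integrableOn_norm_rpow_div_sq_Ioi {x r : ℝ} (hx : 0 < x) (hr : r < 1) :
    IntegrableOn (fun s => ‖s ^ r‖ / (x - s) ^ 2) (Ioi (2 * x)) := by
  have hdom := (integrableOn_Ioi_rpow_of_lt (by linarith : r - 2 < -1)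
    (by positivity : (0 : ℝ) < 2 * x)).const_mul 4
  refine hdom.mono'
    (by fun_prop : Measurable fun s : ℝ => ‖s ^ r‖ / (x - s) ^ 2).aestronglyMeasurable
    ((ae_restrict_iff' measurableSet_Ioi).2 (Eventually.of_forall fun s hs => ?_))
  have hs : 2 * x < s := hs
  have hs0 : 0 < s := by linarith
  calc ‖‖s ^ r‖ / (x - s) ^ 2‖ = s ^ r / (x - s) ^ 2 := by
        rw [norm_of_nonneg (by positivity), Real.norm_eq_abs, abs_of_nonneg (by positivity)]
    _ ≤ s ^ r / (s ^ 2 / 4) := by gcongr; nlinarith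
    _ = 4 * s ^ (r - 2) := by rw [rpow_sub hs0, rpow_two]; field_simp

theorem tendsto_integral_Ioi_mul_rpow_div_sq_add_sq {x r : ℝ} (hx : 0 < x) (hr : r ∈ Ioo (-1) 1) :
    Tendsto (fun y => ∫ s in Ioi 0, y * s ^ r / ((x - s) ^ 2 + y ^ 2)) (𝓝[>] 0)
      (𝓝 (π * x ^ r)) := by
  have hnear : IntegrableOn (fun s : ℝ => s ^ r) (Ioc 0 (2 * x)) :=
    (intervalIntegral.intervalIntegrable_rpow' hr.1).1
  have htail := integrableOn_norm_rpow_div_sq_Ioi hx hr.2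
  have hlim := (tendsto_setIntegral_poisson_smul (Ioc_mem_nhds hx (by linarith)) measurableSet_Ioc
    hnear (continuousAt_rpow_const _ _ (Or.inl hx.ne'))).add
    ((tendsto_setIntegral_poisson_smul_zero htail).mono_left nhdsWithin_le_nhds)
  rw [smul_eq_mul, add_zero] at hlim
  refine hlim.congr fun y => ?_
  rw [← setIntegral_union (Ioc_disjoint_Ioi le_rfl) measurableSet_Ioi
    (integrableOn_poisson_smul hnear y)
    (integrableOn_poisson_smul_of_integrableOn_norm_div_sq (by fun_prop) htail y),
    Ioc_union_Ioi_eq_Ioi (by positivity)]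
  simp only [smul_eq_mul, div_mul_eq_mul_div]

/-- For fixed `x₁ > 0` and `α ∈ (0,1)`, as `x₂ → 0⁺` one has
`(1/(2π)) ∫₀^∞ x₂ s^(α−1)/((x₁−s)² + x₂²) ds → x₁^(α−1)/2`, and the limit as
`x₂ → 0⁻` equals `−x₁^(α−1)/2`. -/
theorem poisson_kernel_limit (x₁ α : ℝ) (hx₁ : 0 < x₁) (hα : α ∈ Set.Ioo (0:ℝ) 1) :
    Tendsto
      (fun x₂ : ℝ =>
        (1 / (2 * Real.pi)) *
          ∫ s in Set.Ioi (0:ℝ), x₂ * s ^ (α - 1) / ((x₁ - s) ^ 2 + x₂ ^ 2))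
      (nhdsWithin 0 (Set.Ioi 0)) (nhds (x₁ ^ (α - 1) / 2)) ∧
    Tendsto
      (fun x₂ : ℝ =>
        (1 / (2 * Real.pi)) *
          ∫ s in Set.Ioi (0:ℝ), x₂ * s ^ (α - 1) / ((x₁ - s) ^ 2 + x₂ ^ 2))
      (nhdsWithin 0 (Set.Iio 0)) (nhds (-(x₁ ^ (α - 1) / 2))) := by
  set F := fun x₂ : ℝ =>
    (1 / (2 * π)) * ∫ s in Ioi (0:ℝ), x₂ * s ^ (α - 1) / ((x₁ - s) ^ 2 + x₂ ^ 2)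
  have hpos : Tendsto F (𝓝[>] 0) (𝓝 (x₁ ^ (α - 1) / 2)) := by
    convert (tendsto_integral_Ioi_mul_rpow_div_sq_add_sq (r := α - 1) hx₁
      ⟨by linarith [hα.1], by linarith [hα.2]⟩).const_mul (1 / (2 * π)) using 2
    field_simp
  have hodd : ∀ x₂, -F (-x₂) = F x₂ := fun x₂ => by
    simp only [F, neg_mul, neg_div, neg_sq, integral_neg, mul_neg, neg_neg]
  refine ⟨hpos, ?_⟩
  have hneg : Tendsto Neg.neg (𝓝[<] (0 : ℝ)) (𝓝[>] 0) := by
    simpa using tendsto_neg_nhdsLT (a := (0 : ℝ))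
  exact (hpos.comp hneg).neg.congr hodd
end

section
/- Fix x₁ > 0 and α ∈ (0,1). Then lim_{x₂→0} ∫₀^∞ (x₁ − s) s^(α−1) / ((x₁ − s)² + x₂²) ds = PV ∫₀^∞ s^(α−1)/(x₁ − s) ds, where the principal value is lim_{ε→0⁺} (∫₀^{x₁−ε} + ∫_{x₁+ε}^∞) of s^(α−1)/(x₁ − s) ds. -/
/-!
Both limits are computed after removing the singular part near `x₁`. Since `u ↦ u / (u² + x₂²)`
and `u ↦ 1 / u` are odd, the term `x₁^(α-1)` contributes nothing to either side over intervals
symmetric about `x₁`. What remains, `(s^(α-1) - x₁^(α-1)) / (x₁ - s)` on `(0, 2x₁]` and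
`s^(α-1) / (x₁ - s)` beyond `2x₁`, is integrable: it is bounded near `x₁` by the mean value
theorem, `s^(α-1)` is integrable at `0` and `s^(α-2)` at `∞`. The kernel integrals then converge
by dominated convergence, because `|u A / (u² + x₂²)| ≤ |A / u|`, and the truncated integrals by
continuity of the primitive, to one and the same regularised integral.
-/

open MeasureTheory Filter Real Set Topology
open scoped Interval

namespace Function.Odd

variable {g : ℝ → ℝ}

theorem intervalIntegral_neg_bounds (hg : Function.Odd g) (a b : ℝ) :
    ∫ x in -b..-a, g x = -∫ x in a..b, g x := by
  rw [← intervalIntegral.integral_comp_neg, ← intervalIntegral.integral_neg]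
  exact intervalIntegral.integral_congr fun x _ => hg x

theorem integral_comp_sub_left_eq_zero (hg : Function.Odd g) (c r : ℝ) :
    ∫ s in (c - r)..(c + r), g (c - s) = 0 := by
  have h := hg.intervalIntegral_neg_bounds (-r) r
  rw [neg_neg] at h
  rw [intervalIntegral.integral_comp_sub_left, sub_sub_cancel, sub_add_cancel_left]
  linarith

theorem integral_comp_sub_left_add_eq_zero (hg : Function.Odd g) (c a b : ℝ) :
    (∫ s in (c - b)..(c - a), g (c - s)) + ∫ s in (c + a)..(c + b), g (c - s) = 0 := by
  simp only [intervalIntegral.integral_comp_sub_left, sub_sub_cancel, sub_add_cancel_left,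
    hg.intervalIntegral_neg_bounds, add_neg_cancel]

end Function.Odd

section ConjugateKernel

variable {c : ℝ}

theorem abs_mul_div_sq_add_sq_le (A ε : ℝ) {u : ℝ} (hu : u ≠ 0) :
    |u * A / (u ^ 2 + ε ^ 2)| ≤ |A / u| := by
  have hfactor : u * A / (u ^ 2 + ε ^ 2) = A / u * (u ^ 2 / (u ^ 2 + ε ^ 2)) := by
    field_simp
  rw [hfactor, abs_mul, abs_of_nonneg (by positivity : 0 ≤ u ^ 2 / (u ^ 2 + ε ^ 2))]
  exact mul_le_of_le_one_right (abs_nonneg _)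
    (div_le_one_of_le₀ (le_add_of_nonneg_right (sq_nonneg ε)) (by positivity))

theorem tendsto_mul_div_sq_add_sq (A : ℝ) {u : ℝ} (hu : u ≠ 0) :
    Tendsto (fun ε : ℝ => u * A / (u ^ 2 + ε ^ 2)) (𝓝 0) (𝓝 (A / u)) := by
  have hcont : Continuous fun ε : ℝ => u * A / (u ^ 2 + ε ^ 2) :=
    continuous_const.div (by fun_prop) fun ε => by positivity
  convert hcont.tendsto 0 using 2
  rw [zero_pow two_ne_zero, add_zero]
  field_simp

variable {μ : Measure ℝ} [NullSingletonClass μ] {A : ℝ → ℝ}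

theorem ae_norm_mul_div_sq_add_sq_le (ε : ℝ) :
    ∀ᵐ s ∂μ, ‖(c - s) * A s / ((c - s) ^ 2 + ε ^ 2)‖ ≤ ‖A s / (c - s)‖ := by
  filter_upwards [μ.ae_ne c] with s hs
  exact abs_mul_div_sq_add_sq_le _ _ (sub_ne_zero.2 hs.symm)

theorem integrable_mul_div_sq_add_sq (hA : Measurable A)
    (hint : Integrable (fun s => A s / (c - s)) μ) (ε : ℝ) :
    Integrable (fun s => (c - s) * A s / ((c - s) ^ 2 + ε ^ 2)) μ :=
  hint.norm.mono' (by fun_prop : Measurable _).aestronglyMeasurable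
    (ae_norm_mul_div_sq_add_sq_le ε)

theorem tendsto_integral_mul_div_sq_add_sq (hA : Measurable A)
    (hint : Integrable (fun s => A s / (c - s)) μ) :
    Tendsto (fun ε : ℝ => ∫ s, (c - s) * A s / ((c - s) ^ 2 + ε ^ 2) ∂μ) (𝓝 0)
      (𝓝 (∫ s, A s / (c - s) ∂μ)) := by
  refine tendsto_integral_filter_of_dominated_convergence _
    (Eventually.of_forall fun ε => (integrable_mul_div_sq_add_sq hA hint ε).aestronglyMeasurable)
    (Eventually.of_forall ae_norm_mul_div_sq_add_sq_le) hint.norm ?_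
  filter_upwards [μ.ae_ne c] with s hs
  exact tendsto_mul_div_sq_add_sq _ (sub_ne_zero.2 hs.symm)

end ConjugateKernel

section PrincipalValue

variable {f : ℝ → ℝ} {a b c r ε : ℝ}

/-- The principal value `PV ∫_{c-r}^∞ f s / (c - s) ds`, with the term `f c / (c - s)`, whose
principal value over `(c - r, c + r)` vanishes by symmetry, subtracted near the singularity. -/
noncomputable def cauchyPrincipalValue (f : ℝ → ℝ) (c r : ℝ) : ℝ :=
  (∫ s in (c - r)..(c + r), (f s - f c) / (c - s)) + ∫ s in Ioi (c + r), f s / (c - s)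

theorem tendsto_integral_Ioi_mul_div_sq_add_sq_cauchyPrincipalValue (hr : 0 ≤ r)
    (hf : Measurable f)
    (hnear : IntervalIntegrable (fun s => (f s - f c) / (c - s)) volume (c - r) (c + r))
    (hfar : IntegrableOn (fun s => f s / (c - s)) (Ioi (c + r))) :
    Tendsto (fun ε : ℝ => ∫ s in Ioi (c - r), (c - s) * f s / ((c - s) ^ 2 + ε ^ 2)) (𝓝[≠] 0)
      (𝓝 (cauchyPrincipalValue f c r)) := by
  have hcr : c - r ≤ c + r := by linarith
  rw [intervalIntegrable_iff_integrableOn_Ioc_of_le hcr] at hnear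
  have hf' : Measurable fun s => f s - f c := by fun_prop
  have hlim := ((tendsto_integral_mul_div_sq_add_sq hf' hnear).add
    (tendsto_integral_mul_div_sq_add_sq hf hfar)).mono_left (nhdsWithin_le_nhds (s := {0}ᶜ))
  rw [cauchyPrincipalValue, intervalIntegral.integral_of_le hcr]
  refine hlim.congr' (eventually_nhdsWithin_of_forall fun ε (hε : ε ≠ 0) => ?_)
  beta_reduce
  have hsplit : ∀ s, (c - s) * f s / ((c - s) ^ 2 + ε ^ 2) =
      (c - s) * (f s - f c) / ((c - s) ^ 2 + ε ^ 2) + f c * ((c - s) / ((c - s) ^ 2 + ε ^ 2)) :=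
    fun s => by ring
  have hodd : Function.Odd fun u : ℝ => u / (u ^ 2 + ε ^ 2) := fun u => by
    simp only [neg_sq, neg_div]
  have hodd_int : IntegrableOn (fun s => f c * ((c - s) / ((c - s) ^ 2 + ε ^ 2)))
      (Ioc (c - r) (c + r)) :=
    (continuous_const.mul ((continuous_const.sub continuous_id).div (by fun_prop)
      fun s => by positivity)).integrableOn_Ioc
  have hodd_zero : ∫ s in Ioc (c - r) (c + r), f c * ((c - s) / ((c - s) ^ 2 + ε ^ 2)) = 0 := by
    rw [integral_const_mul, ← intervalIntegral.integral_of_le hcr,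
      hodd.integral_comp_sub_left_eq_zero, mul_zero]
  have hK := (integrable_mul_div_sq_add_sq hf' hnear ε).add hodd_int
  rw [← Ioc_union_Ioi_eq_Ioi hcr, setIntegral_union Ioc_disjoint_Ioi_same measurableSet_Ioi
      (hK.congr (ae_of_all _ fun s => (hsplit s).symm)) (integrable_mul_div_sq_add_sq hf hfar ε),
    setIntegral_congr_fun measurableSet_Ioc fun s _ => hsplit s, integral_add
      (integrable_mul_div_sq_add_sq hf' hnear ε) hodd_int, hodd_zero, add_zero]

theorem intervalIntegrable_inv_sub (hc : c ∉ [[a, b]]) :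
    IntervalIntegrable (fun s => (c - s)⁻¹) volume a b :=
  intervalIntegral.intervalIntegrable_inv
    (fun _ hs => sub_ne_zero.2 (ne_of_mem_of_not_mem hs hc).symm) (by fun_prop)

theorem div_sub_eq_sub_div_add (f : ℝ → ℝ) (c s : ℝ) :
    f s / (c - s) = (f s - f c) / (c - s) + f c * (c - s)⁻¹ := by
  ring

theorem intervalIntegrable_div_sub (hc : c ∉ [[a, b]])
    (hh : IntervalIntegrable (fun s => (f s - f c) / (c - s)) volume a b) :
    IntervalIntegrable (fun s => f s / (c - s)) volume a b := by
  simp only [div_sub_eq_sub_div_add f c]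
  exact hh.add ((intervalIntegrable_inv_sub hc).const_mul _)

theorem intervalIntegral_div_sub (hc : c ∉ [[a, b]])
    (hh : IntervalIntegrable (fun s => (f s - f c) / (c - s)) volume a b) :
    ∫ s in a..b, f s / (c - s) =
      (∫ s in a..b, (f s - f c) / (c - s)) + f c * ∫ s in a..b, (c - s)⁻¹ := by
  simp only [div_sub_eq_sub_div_add f c]
  rw [intervalIntegral.integral_add hh ((intervalIntegrable_inv_sub hc).const_mul _),
    intervalIntegral.integral_const_mul]

theorem integral_div_sub_add_integral_Ioi_div_sub (hε : 0 < ε) (hεr : ε ≤ r)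
    (hnear : IntervalIntegrable (fun s => (f s - f c) / (c - s)) volume (c - r) (c + r))
    (hfar : IntegrableOn (fun s => f s / (c - s)) (Ioi (c + r))) :
    (∫ s in (c - r)..(c - ε), f s / (c - s)) + ∫ s in Ioi (c + ε), f s / (c - s) =
      (∫ s in (c - r)..(c - ε), (f s - f c) / (c - s)) +
        (∫ s in (c + ε)..(c + r), (f s - f c) / (c - s)) + ∫ s in Ioi (c + r), f s / (c - s) := by
  have hleft : c ∉ [[c - r, c - ε]] := fun h => by
    rw [uIcc_of_le (by linarith)] at h; linarith [h.2]
  have hright : c ∉ [[c + ε, c + r]] := fun h => by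
    rw [uIcc_of_le (by linarith)] at h; linarith [h.1]
  have hnear_left := hnear.mono_set
    (uIcc_subset_uIcc left_mem_uIcc (mem_uIcc_of_le (by linarith) (by linarith : c - ε ≤ c + r)))
  have hnear_right := hnear.mono_set
    (uIcc_subset_uIcc (mem_uIcc_of_le (by linarith) (by linarith : c + ε ≤ c + r)) right_mem_uIcc)
  have hodd : Function.Odd fun u : ℝ => u⁻¹ := fun _ => inv_neg
  rw [← intervalIntegral.integral_interval_add_Ioi' (intervalIntegrable_div_sub hright hnear_right)
    hfar, intervalIntegral_div_sub hleft hnear_left, intervalIntegral_div_sub hright hnear_right]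
  linear_combination f c * hodd.integral_comp_sub_left_add_eq_zero c ε r

theorem tendsto_integral_div_sub_cauchyPrincipalValue (hr : 0 < r)
    (hnear : IntervalIntegrable (fun s => (f s - f c) / (c - s)) volume (c - r) (c + r))
    (hfar : IntegrableOn (fun s => f s / (c - s)) (Ioi (c + r))) :
    Tendsto (fun ε : ℝ =>
        (∫ s in (c - r)..(c - ε), f s / (c - s)) + ∫ s in Ioi (c + ε), f s / (c - s))
      (𝓝[>] 0) (𝓝 (cauchyPrincipalValue f c r)) := by
  set G := fun x => ∫ s in (c - r)..x, (f s - f c) / (c - s)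
  have hG : ContinuousAt G c :=
    (intervalIntegral.continuousOn_primitive_interval' hnear left_mem_uIcc).continuousAt
      (by rw [uIcc_of_le (by linarith)]; exact Icc_mem_nhds (by linarith) (by linarith))
  have hsub : Tendsto (fun ε : ℝ => c - ε) (𝓝 0) (𝓝 c) := by
    simpa using tendsto_const_nhds.sub (tendsto_id (x := 𝓝 (0:ℝ)))
  have hadd : Tendsto (fun ε : ℝ => c + ε) (𝓝 0) (𝓝 c) := by
    simpa using tendsto_const_nhds.add (tendsto_id (x := 𝓝 (0:ℝ)))
  have hlim := (((hG.tendsto.comp hsub).add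
    ((tendsto_const_nhds (x := G (c + r))).sub (hG.tendsto.comp hadd))).add
    (tendsto_const_nhds (x := ∫ s in Ioi (c + r), f s / (c - s)))).mono_left
    (nhdsWithin_le_nhds (s := Ioi 0))
  rw [add_sub_cancel] at hlim
  refine hlim.congr' ?_
  filter_upwards [Ioo_mem_nhdsGT hr] with ε hε
  rw [integral_div_sub_add_integral_Ioi_div_sub hε.1 hε.2.le hnear hfar,
    ← intervalIntegral.integral_interval_sub_left hnear (hnear.mono_set
      (uIcc_subset_uIcc left_mem_uIcc (mem_uIcc_of_le (by linarith [hε.1]) (by linarith [hε.2]))))]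
  rfl

end PrincipalValue

section Rpow

variable {p c : ℝ}

theorem abs_rpow_sub_rpow_le_s6 {m s t : ℝ} (hp : p ≤ 1) (hm : 0 < m) (hs : m ≤ s) (ht : m ≤ t) :
    |s ^ p - t ^ p| ≤ |p| * m ^ (p - 1) * |s - t| := by
  have hderiv : ∀ u ∈ Ici m, HasDerivWithinAt (fun u : ℝ => u ^ p) (p * u ^ (p - 1)) (Ici m) u :=
    fun u hu => (hasDerivAt_rpow_const (Or.inl (hm.trans_le hu).ne')).hasDerivWithinAt
  have hbound : ∀ u ∈ Ici m, ‖p * u ^ (p - 1)‖ ≤ |p| * m ^ (p - 1) := fun u hu => by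
    have hu : m ≤ u := hu
    rw [norm_mul, norm_eq_abs, norm_eq_abs, abs_of_nonneg (rpow_nonneg (hm.le.trans hu) _)]
    exact mul_le_mul_of_nonneg_left (rpow_le_rpow_of_nonpos hm hu (by linarith)) (abs_nonneg p)
  exact (convex_Ici m).norm_image_sub_le_of_norm_hasDerivWithin_le hderiv hbound ht hs

theorem abs_rpow_sub_rpow_div_sub_le {s : ℝ} (hp : p ≤ 1) (hc : 0 < c) (hs : 0 < s) :
    |(s ^ p - c ^ p) / (c - s)| ≤ 2 / c * (s ^ p + c ^ p) + |p| * (c / 2) ^ (p - 1) := by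
  have hsp : 0 ≤ s ^ p := rpow_nonneg hs.le _
  have hcp : 0 ≤ c ^ p := rpow_nonneg hc.le _
  have hlip : 0 ≤ |p| * (c / 2) ^ (p - 1) := by positivity
  rw [abs_div]
  rcases le_or_gt s (c / 2) with hsc | hsc
  · have hfar : c / 2 ≤ |c - s| := by rw [abs_of_pos (by linarith)]; linarith
    calc |s ^ p - c ^ p| / |c - s| ≤ (s ^ p + c ^ p) / (c / 2) := by
          gcongr
          exact (abs_sub _ _).trans (by rw [abs_of_nonneg hsp, abs_of_nonneg hcp])
      _ = 2 / c * (s ^ p + c ^ p) := by ring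
      _ ≤ _ := le_add_of_nonneg_right hlip
  · refine div_le_of_le_mul₀ (abs_nonneg _) (by positivity) ?_
    calc |s ^ p - c ^ p| ≤ |p| * (c / 2) ^ (p - 1) * |c - s| := by
          rw [abs_sub_comm c s]
          exact abs_rpow_sub_rpow_le_s6 hp (by linarith) hsc.le (by linarith)
      _ ≤ _ := by gcongr; exact le_add_of_nonneg_left (by positivity)

theorem integrableOn_rpow_sub_rpow_div_sub (hp : -1 < p) (hp1 : p ≤ 1) (hc : 0 < c) (b : ℝ) :
    IntegrableOn (fun s => (s ^ p - c ^ p) / (c - s)) (Ioc 0 b) := by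
  have hdom : IntegrableOn (fun s => 2 / c * (s ^ p + c ^ p) + |p| * (c / 2) ^ (p - 1))
      (Ioc 0 b) :=
    (((intervalIntegral.intervalIntegrable_rpow' hp).1.add
      (integrableOn_const measure_Ioc_lt_top.ne)).const_mul _).add
      (integrableOn_const measure_Ioc_lt_top.ne)
  refine hdom.mono' (by fun_prop : Measurable _).aestronglyMeasurable ?_
  filter_upwards [ae_restrict_mem measurableSet_Ioc] with s hs
  exact abs_rpow_sub_rpow_div_sub_le hp1 hc hs.1

theorem integrableOn_Ioi_rpow_div_sub {b : ℝ} (hp : p < 0) (hc : 0 ≤ c) (hcb : c < b) :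
    IntegrableOn (fun s => s ^ p / (c - s)) (Ioi b) := by
  have hdom : IntegrableOn (fun s => b / (b - c) * s ^ (p - 1)) (Ioi b) :=
    (integrableOn_Ioi_rpow_of_lt (by linarith) (by linarith)).const_mul _
  refine hdom.mono' (by fun_prop : Measurable _).aestronglyMeasurable ?_
  filter_upwards [ae_restrict_mem measurableSet_Ioi] with s (hs : b < s)
  have hs0 : 0 < s := by linarith
  have hratio : s / (s - c) ≤ b / (b - c) := by
    rw [div_le_div_iff₀ (by linarith) (by linarith)]; nlinarith
  calc ‖s ^ p / (c - s)‖ = s ^ (p - 1) * (s / (s - c)) := by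
        rw [norm_div, norm_of_nonneg (rpow_nonneg hs0.le _), norm_eq_abs, abs_sub_comm,
          abs_of_pos (by linarith), rpow_sub_one hs0.ne']
        field_simp
    _ ≤ s ^ (p - 1) * (b / (b - c)) := by gcongr
    _ = b / (b - c) * s ^ (p - 1) := mul_comm _ _

end Rpow

/-- For fixed `x₁ > 0` and `α ∈ (0,1)`,
`lim_{x₂→0} ∫₀^∞ (x₁−s) s^(α−1)/((x₁−s)² + x₂²) ds = PV ∫₀^∞ s^(α−1)/(x₁−s) ds`,
where the principal value is `lim_{ε→0⁺} (∫₀^{x₁−ε} + ∫_{x₁+ε}^∞) s^(α−1)/(x₁−s) ds`. -/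
theorem conjugate_kernel_limit (x₁ α : ℝ) (hx₁ : 0 < x₁) (hα : α ∈ Set.Ioo (0:ℝ) 1)
    (L : ℝ)
    (hPV : Tendsto
      (fun ε : ℝ =>
        (∫ s in (0:ℝ)..(x₁ - ε), s ^ (α - 1) / (x₁ - s)) +
        ∫ s in Set.Ioi (x₁ + ε), s ^ (α - 1) / (x₁ - s))
      (nhdsWithin 0 (Set.Ioi 0)) (nhds L)) :
    Tendsto
      (fun x₂ : ℝ =>
        ∫ s in Set.Ioi (0:ℝ), (x₁ - s) * s ^ (α - 1) / ((x₁ - s) ^ 2 + x₂ ^ 2))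
      (nhdsWithin 0 {(0:ℝ)}ᶜ) (nhds L) := by
  obtain ⟨hα0, hα1⟩ := hα
  have hnear : IntervalIntegrable (fun s => (s ^ (α - 1) - x₁ ^ (α - 1)) / (x₁ - s)) volume
      (x₁ - x₁) (x₁ + x₁) := by
    rw [sub_self, intervalIntegrable_iff_integrableOn_Ioc_of_le (by linarith)]
    exact integrableOn_rpow_sub_rpow_div_sub (by linarith) (by linarith) hx₁ _
  have hfar := integrableOn_Ioi_rpow_div_sub (p := α - 1) (by linarith) hx₁.le
    (by linarith : x₁ < x₁ + x₁)
  have hpv := tendsto_integral_div_sub_cauchyPrincipalValue hx₁ hnear hfar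
  have hker := tendsto_integral_Ioi_mul_div_sq_add_sq_cauchyPrincipalValue hx₁.le
    (by fun_prop) hnear hfar
  rw [sub_self] at hpv hker
  rwa [tendsto_nhds_unique hPV hpv]
end

section
/- For x₁ > 0 and α ∈ (0,1), lim_{ε→0⁺} lim_{x₂→0} ∫_{x₁−ε}^{x₁+ε} (x₁ − s) s^(α−1)/((x₁ − s)² + x₂²) ds = 0, where the inner limit exists and equals ∫_{x₁−ε}^{x₁} (s^(α−1) − (2x₁−s)^(α−1))/(x₁ − s) ds. -/
/-!
Splitting the integral at `x₁` and reflecting `s ↦ 2x₁ - s` pairs the two halves into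
`(x₁ - s) (s^(α-1) - (2x₁ - s)^(α-1)) / ((x₁ - s)² + x₂²)` on `[x₁ - ε, x₁]`. Since `s ↦ s^(α-1)` is
Lipschitz on `[x₁/2, ∞)`, the difference is `O(x₁ - s)`, so this integrand is bounded uniformly in
`x₂`: dominated convergence gives the inner limit, and the limit integrand, being bounded, has
integral `O(ε)`.
-/

open MeasureTheory Filter Real Set Topology

namespace Real

theorem abs_rpow_sub_rpow_le {p m t u : ℝ} (hm : 0 < m) (hp : p ≤ 1) (ht : m ≤ t) (hu : m ≤ u) :
    |t ^ p - u ^ p| ≤ |p| * m ^ (p - 1) * |t - u| := by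
  refine (convex_Ici m).norm_image_sub_le_of_norm_hasDerivWithin_le
    (f := fun x => x ^ p) (f' := fun x => p * x ^ (p - 1)) (fun x hx => ?_) (fun x hx => ?_) hu ht
  · exact (hasDerivAt_rpow_const (Or.inl (hm.trans_le hx).ne')).hasDerivWithinAt
  · rw [norm_mul, norm_eq_abs, norm_eq_abs, abs_of_nonneg (rpow_nonneg (hm.le.trans hx) _)]
    exact mul_le_mul_of_nonneg_left (rpow_le_rpow_of_nonpos hm hx (by linarith)) (abs_nonneg p)

theorem abs_rpow_sub_rpow_two_mul_sub_le {p c s : ℝ} (hp : p ≤ 1) (hs : s ∈ Icc (c / 2) c) :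
    |s ^ p - (2 * c - s) ^ p| ≤ 2 * |p| * (c / 2) ^ (p - 1) * (c - s) := by
  rcases eq_or_lt_of_le (hs.1.trans hs.2) with hc | hc
  · have hc0 : c = 0 := by linarith
    have hs0 : s = 0 := by linarith [hs.1, hs.2]
    simp [hc0, hs0]
  have h := abs_rpow_sub_rpow_le (half_pos (by linarith)) hp hs.1
    (show c / 2 ≤ 2 * c - s by linarith [hs.2])
  rwa [abs_of_nonpos (by linarith [hs.2] : s - (2 * c - s) ≤ 0),
    show -(s - (2 * c - s)) = 2 * (c - s) by ring, mul_left_comm _ (2 : ℝ), ← mul_assoc,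
    ← mul_assoc] at h

end Real

theorem intervalIntegral.integral_symmetric_eq_integral_add_reflect {E : Type*}
    [NormedAddCommGroup E] [NormedSpace ℝ E] {h : ℝ → E} {c ε : ℝ}
    (h₁ : IntervalIntegrable h volume (c - ε) c) (h₂ : IntervalIntegrable h volume c (c + ε)) :
    ∫ s in (c - ε)..(c + ε), h s = ∫ s in (c - ε)..c, (h s + h (2 * c - s)) := by
  have h₂' : IntervalIntegrable (fun s => h (2 * c - s)) volume (c - ε) c := by
    simpa [two_mul] using (h₂.comp_sub_left (2 * c)).symm
  have hreflect : ∫ s in c..(c + ε), h s = ∫ s in (c - ε)..c, h (2 * c - s) := by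
    simp [intervalIntegral.integral_comp_sub_left, two_mul]
  rw [← intervalIntegral.integral_add_adjacent_intervals h₁ h₂, hreflect,
    intervalIntegral.integral_add h₁ h₂']

section

variable {φ : ℝ → ℝ} {a c C s : ℝ}

theorem abs_mul_div_sq_add_sq_le_s9 (hφ : |φ s| ≤ C * (c - s)) (hs : s ≤ c) (t : ℝ) :
    |(c - s) * φ s / ((c - s) ^ 2 + t ^ 2)| ≤ |C| := by
  rw [abs_div, abs_mul, abs_of_nonneg (sub_nonneg.2 hs),
    abs_of_nonneg (by positivity : 0 ≤ (c - s) ^ 2 + t ^ 2)]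
  refine div_le_of_le_mul₀ (by positivity) (abs_nonneg C) ?_
  calc (c - s) * |φ s| ≤ (c - s) * (|C| * (c - s)) :=
        mul_le_mul_of_nonneg_left (hφ.trans (mul_le_mul_of_nonneg_right (le_abs_self C)
          (sub_nonneg.2 hs))) (sub_nonneg.2 hs)
    _ ≤ |C| * ((c - s) ^ 2 + t ^ 2) := by nlinarith [abs_nonneg C, sq_nonneg t]

theorem tendsto_integral_mul_div_sq_add_sq_s9 (hac : a ≤ c) (hφ : Measurable φ)
    (hbound : ∀ s ∈ Ioc a c, |φ s| ≤ C * (c - s)) :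
    Tendsto (fun t => ∫ s in a..c, (c - s) * φ s / ((c - s) ^ 2 + t ^ 2)) (𝓝 0)
      (𝓝 (∫ s in a..c, φ s / (c - s))) := by
  refine intervalIntegral.tendsto_integral_filter_of_dominated_convergence (fun _ => |C|)
    (.of_forall fun t => (by fun_prop : Measurable _).aestronglyMeasurable) ?_
    intervalIntegrable_const (.of_forall fun s _ => ?_)
  · refine .of_forall fun t => .of_forall fun s hs => ?_
    rw [uIoc_of_le hac] at hs
    exact abs_mul_div_sq_add_sq_le_s9 (hbound s hs) hs.2 t
  · rcases eq_or_ne s c with rfl | hsc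
    · simp
    have hcs : c - s ≠ 0 := sub_ne_zero.2 hsc.symm
    have hlim : Tendsto (fun t => (c - s) * φ s / ((c - s) ^ 2 + t ^ 2)) (𝓝 0)
        (𝓝 ((c - s) * φ s / ((c - s) ^ 2 + 0 ^ 2))) :=
      (continuous_const.div (by fun_prop) fun t => by positivity).tendsto 0
    convert hlim using 2
    rw [zero_pow two_ne_zero, add_zero, sq, mul_div_mul_left _ _ hcs]

theorem tendsto_integral_div_sub_nhdsGT_zero {δ : ℝ} (hδ : 0 < δ)
    (hbound : ∀ s ∈ Ioc (c - δ) c, |φ s| ≤ C * (c - s)) :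
    Tendsto (fun ε => ∫ s in (c - ε)..c, φ s / (c - s)) (𝓝[>] 0) (𝓝 0) := by
  refine squeeze_zero_norm' (a := fun ε => |C| * ε) ?_ ?_
  · filter_upwards [Ioo_mem_nhdsGT hδ] with ε hε
    have hε' : c - ε ≤ c := by linarith [hε.1]
    have hle := intervalIntegral.norm_integral_le_of_norm_le_const (C := |C|)
      (f := fun s => φ s / (c - s)) (a := c - ε) (b := c) fun s hs => by
        rw [uIoc_of_le hε'] at hs
        have hsc : 0 ≤ c - s := sub_nonneg.2 hs.2
        rw [norm_div, norm_eq_abs, norm_eq_abs, abs_of_nonneg hsc]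
        refine div_le_of_le_mul₀ hsc (abs_nonneg C) ?_
        exact (hbound s ⟨by linarith [hs.1, hε.2], hs.2⟩).trans
          (mul_le_mul_of_nonneg_right (le_abs_self C) hsc)
    rwa [sub_sub_cancel, abs_of_pos hε.1] at hle
  · have hlin : Tendsto (fun ε => |C| * ε) (𝓝 0) (𝓝 0) := by
      simpa using (tendsto_id (x := 𝓝 (0 : ℝ))).const_mul |C|
    exact hlin.mono_left nhdsWithin_le_nhds

end

/-- For `x₁ > 0`, `α ∈ (0,1)` and `ε ∈ (0, x₁/2)`, the limit as `x₂ → 0` of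
`∫_{x₁−ε}^{x₁+ε} (x₁−s)s^(α−1)/((x₁−s)²+x₂²) ds` exists and equals
`∫_{x₁−ε}^{x₁} (s^(α−1) − (2x₁−s)^(α−1))/(x₁−s) ds`, and the latter tends to `0`
as `ε → 0⁺`. -/
theorem iterated_limit_zero (x₁ α : ℝ) (hx₁ : 0 < x₁) (hα : α ∈ Set.Ioo (0:ℝ) 1) :
    (∀ ε : ℝ, 0 < ε → ε < x₁ / 2 →
      Tendsto
        (fun x₂ : ℝ =>
          ∫ s in (x₁ - ε)..(x₁ + ε), (x₁ - s) * s ^ (α - 1) / ((x₁ - s) ^ 2 + x₂ ^ 2))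
        (nhdsWithin 0 {(0:ℝ)}ᶜ)
        (nhds (∫ s in (x₁ - ε)..x₁,
          (s ^ (α - 1) - (2 * x₁ - s) ^ (α - 1)) / (x₁ - s)))) ∧
    Tendsto
      (fun ε : ℝ =>
        ∫ s in (x₁ - ε)..x₁, (s ^ (α - 1) - (2 * x₁ - s) ^ (α - 1)) / (x₁ - s))
      (nhdsWithin 0 (Set.Ioi 0)) (nhds 0) := by
  have hlip : ∀ s ∈ Ioc (x₁ - x₁ / 2) x₁, |s ^ (α - 1) - (2 * x₁ - s) ^ (α - 1)| ≤
      2 * |α - 1| * (x₁ / 2) ^ (α - 1 - 1) * (x₁ - s) := fun s hs =>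
    abs_rpow_sub_rpow_two_mul_sub_le (by linarith [hα.2]) ⟨by linarith [hs.1], hs.2⟩
  refine ⟨fun ε hε hεx => ?_, tendsto_integral_div_sub_nhdsGT_zero (half_pos hx₁) hlip⟩
  have hfold : ∀ x₂ ≠ 0,
      ∫ s in (x₁ - ε)..(x₁ + ε), (x₁ - s) * s ^ (α - 1) / ((x₁ - s) ^ 2 + x₂ ^ 2) =
        ∫ s in (x₁ - ε)..x₁,
          (x₁ - s) * (s ^ (α - 1) - (2 * x₁ - s) ^ (α - 1)) / ((x₁ - s) ^ 2 + x₂ ^ 2) := by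
    intro x₂ hx₂
    have hcont : ContinuousOn (fun s => (x₁ - s) * s ^ (α - 1) / ((x₁ - s) ^ 2 + x₂ ^ 2))
        (Ioi 0) := fun s hs => ContinuousAt.continuousWithinAt <| by
      fun_prop (disch := first | positivity | exact Or.inl (ne_of_gt hs))
    have hpos : ∀ b c, x₁ - ε ≤ b → x₁ - ε ≤ c → uIcc b c ⊆ Ioi 0 := fun b c hb hc s hs =>
      show (0 : ℝ) < s by linarith [(le_inf hb hc).trans hs.1]
    rw [intervalIntegral.integral_symmetric_eq_integral_add_reflect
      (hcont.mono (hpos _ _ le_rfl (by linarith))).intervalIntegrable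
      (hcont.mono (hpos _ _ (by linarith) (by linarith))).intervalIntegrable]
    congr 1 with s
    rw [show x₁ - (2 * x₁ - s) = -(x₁ - s) by ring, neg_sq]
    ring
  exact ((tendsto_integral_mul_div_sq_add_sq_s9 (by linarith) (by fun_prop) fun s hs =>
    hlip s ⟨by linarith [hs.1], hs.2⟩).mono_left nhdsWithin_le_nhds).congr'
    (eventually_nhdsWithin_of_forall fun x₂ hx₂ => (hfold x₂ hx₂).symm)
end

section
/- Let μ ∈ (2/3, 1) and t > 0, and suppose a function v : ℝ² → ℝ² satisfies the spherical-average identity ∫₀^{2π} |v(r e^{iθ})|² dθ = (1/(2π)) (Σ_{n≥0} r^(−2n−2) |m_{r,n}|² + Σ_{n≥1} r^(2n−2) |M_{r,n}|²), where m_{r,n} and M_{r,n} are the inner and outer moments of the Kaden measure ω_t. Then r ∫₀^{2π} |v(r e^{iθ})|² dθ ≤ C r^(3 − 2/μ) for some constant C and all r ∈ (0,1], and in particular ∫_{∂B(0,r)} |v|² dS → 0 as r → 0⁺. -/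
/-!
The phase factors in the moments have modulus one, so each moment is bounded by the integral of
its power weight: with `p = 1/μ ∈ (1, 3/2)`, `‖m_{r,n}‖ ≲ r^(n+2-p)/(n+1)` and
`‖M_{r,n+1}‖ ≲ r^(1-n-p)/(n+1)`. Every term of the moment expansion is therefore
`O(r^(2-2p)/(n+1)²)` uniformly in `n`, so `r` times the spherical average is `O(r^(3-2p))`,
and `3 - 2p > 0` because `μ > 2/3`.
-/

open MeasureTheory Filter Real Set Complex Topology

theorem norm_ofReal_mul_exp_of_re_eq_zero (x : ℝ) {z : ℂ} (hz : z.re = 0) :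
    ‖(x : ℂ) * exp z‖ = |x| := by
  rw [norm_mul, Complex.norm_exp, hz, Real.exp_zero, mul_one, Complex.norm_real, Real.norm_eq_abs]

theorem norm_intervalIntegral_rpow_mul_exp_le {a r : ℝ} {z : ℝ → ℂ} (ha : -1 < a)
    (hr : 0 ≤ r) (hz : ∀ s, (z s).re = 0) :
    ‖∫ s in (0 : ℝ)..r, ((s ^ a : ℝ) : ℂ) * exp (z s)‖ ≤ r ^ (a + 1) / (a + 1) := by
  refine (intervalIntegral.norm_integral_le_integral_norm hr).trans_eq ?_
  have hnorm :
      EqOn (fun s : ℝ => ‖((s ^ a : ℝ) : ℂ) * exp (z s)‖) (fun s => s ^ a) (uIcc 0 r) := by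
    intro s hs
    rw [uIcc_of_le hr] at hs
    simp only [norm_ofReal_mul_exp_of_re_eq_zero _ (hz s), abs_of_nonneg (rpow_nonneg hs.1 a)]
  rw [intervalIntegral.integral_congr hnorm, integral_rpow (Or.inl ha),
    zero_rpow (by linarith : a + 1 ≠ 0), sub_zero]

theorem norm_integral_Ioi_rpow_mul_exp_le {a r : ℝ} {z : ℝ → ℂ} (ha : a < -1) (hr : 0 < r)
    (hz : ∀ s, (z s).re = 0) :
    ‖∫ s in Ioi r, ((s ^ a : ℝ) : ℂ) * exp (z s)‖ ≤ -r ^ (a + 1) / (a + 1) := by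
  refine (norm_integral_le_integral_norm _).trans_eq ?_
  have hnorm :
      EqOn (fun s : ℝ => ‖((s ^ a : ℝ) : ℂ) * exp (z s)‖) (fun s => s ^ a) (Ioi r) := by
    intro s hs
    simp only [norm_ofReal_mul_exp_of_re_eq_zero _ (hz s),
      abs_of_nonneg (rpow_nonneg (hr.trans hs).le a)]
  rw [setIntegral_congr_fun measurableSet_Ioi hnorm, integral_Ioi_rpow_of_lt ha hr]

theorem norm_kaden_inner_moment_le {p r : ℝ} (t : ℝ) (hp : p < 3 / 2) (hr : 0 < r) (n : ℕ) :
    ‖((2 - p : ℝ) : ℂ) * ∫ s in (0 : ℝ)..r,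
        ((s ^ ((n : ℝ) + 1 - p) : ℝ) : ℂ) *
          exp (I * t * n * ((s ^ (-p) : ℝ) : ℂ) / (2 * π))‖ ≤
      2 * (2 - p) / (n + 1) * r ^ ((n : ℝ) + 2 - p) := by
  have hn : (0 : ℝ) ≤ n := n.cast_nonneg
  have hint := norm_intervalIntegral_rpow_mul_exp_le (a := (n : ℝ) + 1 - p) (by linarith) hr.le
    (z := fun s => I * t * n * ((s ^ (-p) : ℝ) : ℂ) / (2 * π))
    (fun s => by simp [Complex.div_re])
  rw [show (n : ℝ) + 1 - p + 1 = n + 2 - p by ring] at hint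
  have hcoef : (2 - p) / ((n : ℝ) + 2 - p) ≤ 2 * (2 - p) / (n + 1) := by
    rw [div_le_div_iff₀ (by linarith) (by linarith)]
    nlinarith
  calc _ ≤ (2 - p) * (r ^ ((n : ℝ) + 2 - p) / (n + 2 - p)) := by
        rw [norm_mul, Complex.norm_real, Real.norm_eq_abs, abs_of_pos (by linarith)]
        gcongr
        linarith
    _ = (2 - p) / (n + 2 - p) * r ^ ((n : ℝ) + 2 - p) := by ring
    _ ≤ _ := by gcongr

theorem norm_kaden_outer_moment_le {p r : ℝ} (t : ℝ) (hp1 : 1 < p) (hp2 : p < 2) (hr : 0 < r)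
    {n : ℕ} (hn : 1 ≤ n) :
    ‖((2 - p : ℝ) : ℂ) * ∫ s in Ioi r,
        ((s ^ (-(n : ℝ) + 1 - p) : ℝ) : ℂ) *
          exp (-(I * t * n * ((s ^ (-p) : ℝ) : ℂ)) / (2 * π))‖ ≤
      (2 - p) / (p - 1) / n * r ^ (-(n : ℝ) + 2 - p) := by
  have hn : (1 : ℝ) ≤ n := by exact_mod_cast hn
  have hint := norm_integral_Ioi_rpow_mul_exp_le (a := -(n : ℝ) + 1 - p) (by linarith) hr
    (z := fun s => -(I * t * n * ((s ^ (-p) : ℝ) : ℂ)) / (2 * π))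
    (fun s => by simp [Complex.div_re])
  rw [show -(n : ℝ) + 1 - p + 1 = -n + 2 - p by ring] at hint
  have hcoef : (2 - p) / ((n : ℝ) - 2 + p) ≤ (2 - p) / (p - 1) / n := by
    rw [div_div, div_le_div_iff₀ (by linarith) (by nlinarith)]
    nlinarith [mul_nonneg (sq_nonneg (2 - p)) (sub_nonneg.2 hn)]
  calc _ ≤ (2 - p) * (-r ^ (-(n : ℝ) + 2 - p) / (-n + 2 - p)) := by
        rw [norm_mul, Complex.norm_real, Real.norm_eq_abs, abs_of_pos (by linarith)]
        gcongr
    _ = (2 - p) / (n - 2 + p) * r ^ (-(n : ℝ) + 2 - p) := by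
        rw [neg_div, ← div_neg]; ring_nf
    _ ≤ _ := by gcongr

theorem summable_one_div_nat_add_one_sq : Summable fun n : ℕ => 1 / ((n : ℝ) + 1) ^ 2 := by
  have := (summable_nat_add_iff 1).mpr (summable_one_div_nat_pow.mpr one_lt_two)
  exact_mod_cast this

theorem tsum_rpow_mul_sq_le {x a b : ℕ → ℝ} {r c e : ℝ} (hr : 0 < r)
    (hx0 : ∀ n, 0 ≤ x n) (hx : ∀ n, x n ≤ c / (n + 1) * r ^ a n) (hab : ∀ n, b n + 2 * a n = e) :
    ∑' n, r ^ b n * x n ^ 2 ≤ c ^ 2 * (∑' n : ℕ, 1 / ((n : ℝ) + 1) ^ 2) * r ^ e := by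
  have hterm : ∀ n, r ^ b n * x n ^ 2 ≤ c ^ 2 * r ^ e * (1 / ((n : ℝ) + 1) ^ 2) := fun n =>
    calc r ^ b n * x n ^ 2 ≤ r ^ b n * (c / (n + 1) * r ^ a n) ^ 2 :=
          mul_le_mul_of_nonneg_left (pow_le_pow_left₀ (hx0 n) (hx n) 2) (rpow_nonneg hr.le _)
      _ = c ^ 2 * (r ^ b n * r ^ a n * r ^ a n) * (1 / ((n : ℝ) + 1) ^ 2) := by
        rw [div_mul_eq_mul_div, div_pow]; ring
      _ = c ^ 2 * r ^ e * (1 / ((n : ℝ) + 1) ^ 2) := by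
        rw [← rpow_add hr, ← rpow_add hr, ← hab n]; ring_nf
  have hmaj := summable_one_div_nat_add_one_sq.mul_left (c ^ 2 * r ^ e)
  calc _ ≤ ∑' n : ℕ, c ^ 2 * r ^ e * (1 / ((n : ℝ) + 1) ^ 2) :=
        (hmaj.of_nonneg_of_le (fun n => by have := hx0 n; positivity) hterm).tsum_le_tsum hterm hmaj
    _ = _ := by rw [tsum_mul_left]; ring

theorem tendsto_nhdsGT_zero_of_le_rpow {f : ℝ → ℝ} {C e : ℝ} (he : 0 < e)
    (hf0 : ∀ r ∈ Ioc (0 : ℝ) 1, 0 ≤ f r)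
    (hf : ∀ r ∈ Ioc (0 : ℝ) 1, f r ≤ C * r ^ e) :
    Tendsto f (𝓝[>] 0) (𝓝 0) := by
  have hlim : Tendsto (fun r : ℝ => C * r ^ e) (𝓝[>] 0) (𝓝 0) := by
    have := ((continuousAt_rpow_const 0 e (Or.inr he.le)).tendsto.const_mul C).mono_left
      (nhdsWithin_le_nhds (s := Ioi 0))
    rwa [zero_rpow he.ne', mul_zero] at this
  have hIoc : Ioc (0 : ℝ) 1 ∈ 𝓝[>] 0 := Ioc_mem_nhdsGT zero_lt_one
  exact squeeze_zero' (eventually_of_mem hIoc hf0) (eventually_of_mem hIoc hf) hlim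

theorem kaden_spherical_average_decay_general (μ t : ℝ) (hμ : μ ∈ Set.Ioo (2/3 : ℝ) 1)
    (v : ℂ → ℂ) (m M : ℝ → ℕ → ℂ)
    (hm0 : ∀ r : ℝ, 0 < r → m r 0 = ((r ^ (2 - 1/μ) : ℝ) : ℂ))
    (hm : ∀ r : ℝ, 0 < r → ∀ n : ℕ, 1 ≤ n → m r n =
      (((2 - 1/μ : ℝ)) : ℂ) *
        ∫ s in (0:ℝ)..r,
          ((s ^ ((n : ℝ) + 1 - 1/μ) : ℝ) : ℂ) *
            Complex.exp (Complex.I * t * n * ((s ^ (-(1/μ)) : ℝ) : ℂ) / (2 * Real.pi)))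
    (hM : ∀ r : ℝ, 0 < r → ∀ n : ℕ, 1 ≤ n → M r n =
      (((2 - 1/μ : ℝ)) : ℂ) *
        ∫ s in Set.Ioi r,
          ((s ^ (-(n : ℝ) + 1 - 1/μ) : ℝ) : ℂ) *
            Complex.exp (-(Complex.I * t * n * ((s ^ (-(1/μ)) : ℝ) : ℂ)) / (2 * Real.pi)))
    (hv : ∀ r : ℝ, 0 < r →
      (∫ θ in (0:ℝ)..(2 * Real.pi), ‖v (r * Complex.exp (θ * Complex.I))‖ ^ 2) =
        (1 / (2 * Real.pi)) *
          ((∑' n : ℕ, r ^ (-2 * (n : ℝ) - 2) * ‖m r n‖ ^ 2) +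
           (∑' n : ℕ, r ^ (2 * ((n : ℝ) + 1) - 2) * ‖M r (n + 1)‖ ^ 2))) :
    (∃ C : ℝ, ∀ r : ℝ, r ∈ Set.Ioc (0:ℝ) 1 →
      r * (∫ θ in (0:ℝ)..(2 * Real.pi), ‖v (r * Complex.exp (θ * Complex.I))‖ ^ 2) ≤
        C * r ^ (3 - 2/μ)) ∧
    Tendsto
      (fun r : ℝ =>
        r * ∫ θ in (0:ℝ)..(2 * Real.pi), ‖v (r * Complex.exp (θ * Complex.I))‖ ^ 2)
      (𝓝[>] 0) (𝓝 0) := by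
  obtain ⟨hμ1, hμ2⟩ := hμ
  set p := 1 / μ with hp
  have hp1 : 1 < p := by rw [hp, lt_div_iff₀ (by linarith)]; linarith
  have hp2 : p < 3 / 2 := by rw [hp, div_lt_iff₀ (by linarith)]; linarith
  have hm_le (r : ℝ) (hr : 0 < r) (n : ℕ) :
      ‖m r n‖ ≤ 2 * (2 - p) / (n + 1) * r ^ ((n : ℝ) + 2 - p) := by
    rcases n with _ | n
    · rw [hm0 r hr, Complex.norm_real, Real.norm_eq_abs, abs_of_nonneg (rpow_nonneg hr.le _)]
      simp only [Nat.cast_zero, zero_add, div_one]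
      exact le_mul_of_one_le_left (rpow_nonneg hr.le _) (by linarith)
    · rw [hm r hr _ n.succ_pos]
      exact norm_kaden_inner_moment_le t hp2 hr _
  have hM_le (r : ℝ) (hr : 0 < r) (n : ℕ) :
      ‖M r (n + 1)‖ ≤ (2 - p) / (p - 1) / (n + 1) * r ^ (-((n : ℝ) + 1) + 2 - p) := by
    rw [hM r hr _ n.succ_pos]
    exact_mod_cast norm_kaden_outer_moment_le t hp1 (by linarith) hr n.succ_pos
  set S := ∑' n : ℕ, 1 / ((n : ℝ) + 1) ^ 2
  set C := ((2 * (2 - p)) ^ 2 + ((2 - p) / (p - 1)) ^ 2) * S / (2 * π)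
  have hbound : ∀ r ∈ Ioc (0 : ℝ) 1,
      r * (∫ θ in (0 : ℝ)..(2 * π), ‖v (r * exp (θ * I))‖ ^ 2) ≤
        C * r ^ (3 - 2 / μ) := by
    rintro r ⟨hr, -⟩
    have hinner := tsum_rpow_mul_sq_le hr (fun n => norm_nonneg _) (hm_le r hr)
      (b := fun n => -2 * (n : ℝ) - 2) (e := 2 - 2 * p) (fun n => by ring)
    have houter := tsum_rpow_mul_sq_le hr (fun n => norm_nonneg _) (hM_le r hr)
      (b := fun n => 2 * ((n : ℝ) + 1) - 2) (e := 2 - 2 * p)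
      (fun n => by ring)
    calc _ ≤ r * (1 / (2 * π) * ((2 * (2 - p)) ^ 2 * S * r ^ (2 - 2 * p) +
            ((2 - p) / (p - 1)) ^ 2 * S * r ^ (2 - 2 * p))) := by
          rw [hv r hr]; gcongr
      _ = C * (r ^ (1 : ℝ) * r ^ (2 - 2 * p)) := by rw [rpow_one]; ring
      _ = C * r ^ (3 - 2 / μ) := by rw [← rpow_add hr, hp]; ring_nf
  refine ⟨⟨C, hbound⟩, tendsto_nhdsGT_zero_of_le_rpow (e := 3 - 2 / μ) ?_ ?_ hbound⟩
  · have : 2 / μ = 2 * p := by rw [hp]; ring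
    linarith
  · rintro r ⟨hr, -⟩
    exact mul_nonneg hr.le
      (intervalIntegral.integral_nonneg (by positivity) fun _ _ => by positivity)

/-- For `μ ∈ (2/3,1)` and `t > 0`: if `v` satisfies the moment expansion of the
spherical averages for the Kaden measure `ω_t`, then
`r ∫₀^{2π} |v(re^{iθ})|² dθ ≤ C r^(3−2/μ)` for `r ∈ (0,1]`, and in particular
the spherical integrals `∫_{∂B(0,r)} |v|² dS` tend to `0` as `r → 0⁺`. -/
theorem kaden_spherical_average_decay (μ t : ℝ) (hμ : μ ∈ Set.Ioo (2/3 : ℝ) 1)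
    (ht : 0 < t) (v : ℂ → ℂ) (m M : ℝ → ℕ → ℂ)
    (hm0 : ∀ r : ℝ, 0 < r → m r 0 = ((r ^ (2 - 1/μ) : ℝ) : ℂ))
    (hm : ∀ r : ℝ, 0 < r → ∀ n : ℕ, 1 ≤ n → m r n =
      (((2 - 1/μ : ℝ)) : ℂ) *
        ∫ s in (0:ℝ)..r,
          ((s ^ ((n : ℝ) + 1 - 1/μ) : ℝ) : ℂ) *
            Complex.exp (Complex.I * t * n * ((s ^ (-(1/μ)) : ℝ) : ℂ) / (2 * Real.pi)))
    (hM : ∀ r : ℝ, 0 < r → ∀ n : ℕ, 1 ≤ n → M r n =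
      (((2 - 1/μ : ℝ)) : ℂ) *
        ∫ s in Set.Ioi r,
          ((s ^ (-(n : ℝ) + 1 - 1/μ) : ℝ) : ℂ) *
            Complex.exp (-(Complex.I * t * n * ((s ^ (-(1/μ)) : ℝ) : ℂ)) / (2 * Real.pi)))
    (hv : ∀ r : ℝ, 0 < r →
      (∫ θ in (0:ℝ)..(2 * Real.pi), ‖v (r * Complex.exp (θ * Complex.I))‖ ^ 2) =
        (1 / (2 * Real.pi)) *
          ((∑' n : ℕ, r ^ (-2 * (n : ℝ) - 2) * ‖m r n‖ ^ 2) +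
           (∑' n : ℕ, r ^ (2 * ((n : ℝ) + 1) - 2) * ‖M r (n + 1)‖ ^ 2))) :
    (∃ C : ℝ, ∀ r : ℝ, r ∈ Set.Ioc (0:ℝ) 1 →
      r * (∫ θ in (0:ℝ)..(2 * Real.pi), ‖v (r * Complex.exp (θ * Complex.I))‖ ^ 2) ≤
        C * r ^ (3 - 2/μ)) ∧
    Tendsto
      (fun r : ℝ =>
        r * ∫ θ in (0:ℝ)..(2 * Real.pi), ‖v (r * Complex.exp (θ * Complex.I))‖ ^ 2)
      (𝓝[>] 0) (𝓝 0) :=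
  kaden_spherical_average_decay_general μ t hμ v m M hm0 hm hM hv
end
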